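/- arXiv:2309.16803 — 2 statements merged into one kernel-verified Lean document; each statement's English description precedes it below -/
import Mathlib

section
/- Let n ≥ 2 and let A be a Young function such that ∫₀¹ (t/A(t))^{1/(n−1)} dt < ∞. Define Hₙ(s) = (∫₀ˢ (t/A(t))^{1/(n−1)} dt)^{(n−1)/n} for s ≥ 0, and the Sobolev conjugate Aₙ(t) = A(Hₙ⁻¹(t)). Then for every t > 0, one has 1/(Ã⁻¹(t)) · 1/(Aₙ⁻¹(t)) ≤ 1/t^{(n−1)/n}, where Ã is the Young conjugate of A and the inverses are generalized right-continuous inverses. -/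
open scoped ENNReal

/-- `Hₙ(s) = (∫₀ˢ (r/A(r))^{1/(n−1)} dr)^{(n−1)/n}`. -/
noncomputable def sobolevH (A : ℝ → ℝ) (n : ℕ) (s : ℝ) : ℝ :=
  (∫ r in (0 : ℝ)..s, (r / A r) ^ ((1 : ℝ) / ((n : ℝ) - 1))) ^ (((n : ℝ) - 1) / n)

/-- The generalized right-continuous inverse of `Hₙ`. -/
noncomputable def sobolevHInv (A : ℝ → ℝ) (n : ℕ) (t : ℝ) : ℝ :=
  sSup {s : ℝ | 0 ≤ s ∧ sobolevH A n s ≤ t}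

/-- The Sobolev conjugate `Aₙ(t) = A(Hₙ⁻¹(t))`. -/
noncomputable def sobolevConj (A : ℝ → ℝ) (n : ℕ) (t : ℝ) : ℝ :=
  A (sobolevHInv A n t)

/-- The Young conjugate `Ã(t) = sup {τ t − A τ : τ ≥ 0}`. -/
noncomputable def youngConj (A : ℝ → ℝ≥0∞) (t : ℝ) : ℝ≥0∞ :=
  ⨆ τ ∈ Set.Ici (0 : ℝ), (ENNReal.ofReal (τ * t) - A τ)

/-- The generalized right-continuous inverse `B⁻¹(s) = sup {t ≥ 0 : B t ≤ s}`. -/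
noncomputable def rcInv (B : ℝ → ℝ≥0∞) (s : ℝ≥0∞) : ℝ≥0∞ :=
  ⨆ t ∈ {t : ℝ | 0 ≤ t ∧ B t ≤ s}, ENNReal.ofReal t

/-! Given `t > 0`, pick `s > 0` with `A s = t`. Since `A r / r` is nondecreasing,
`τ (A s / s) ≤ A s + A τ` for every `τ ≥ 0`, so `Ã(t / s) ≤ t` and `Ã⁻¹(t) ≥ t / s`. Since `Hₙ` is
strictly increasing, `Aₙ(Hₙ(s)) = A(s) = t`, so `Aₙ⁻¹(t) ≥ Hₙ(s)`; bounding the integrand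
`(r / A r)^{1/(n-1)}` on `(0, s)` below by its value at `s` gives `Hₙ(s) ≥ s t^{-1/n}`.
Multiplying, `Ã⁻¹(t) Aₙ⁻¹(t) ≥ t^{(n-1)/n}`. -/

open Set MeasureTheory

section YoungFunction

variable {A : ℝ → ℝ}

theorem div_le_div_of_convexOn_Ici (hconv : ConvexOn ℝ (Ici 0) A) (h0 : A 0 = 0)
    {a b : ℝ} (ha : 0 < a) (hab : a ≤ b) : A a / a ≤ A b / b := by
  simpa [h0] using hconv.secant_mono self_mem_Ici ha.le (ha.trans_le hab).le ha.ne'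
    (ha.trans_le hab).ne' hab

theorem continuousOn_Ioi_of_convexOn_Ici (hconv : ConvexOn ℝ (Ici 0) A) :
    ContinuousOn A (Ioi 0) := by
  simpa only [interior_Ici] using hconv.continuousOn_interior

theorem exists_pos_eq_of_convexOn_Ici (hconv : ConvexOn ℝ (Ici 0) A) (h0 : A 0 = 0)
    (h1 : 0 < A 1) {t : ℝ} (ht : 0 < t) : ∃ s, 0 < s ∧ A s = t := by
  set ε := min 1 (t / A 1)
  set M := max 1 (t / A 1)
  have hε : 0 < ε := lt_min one_pos (div_pos ht h1)
  -- `A ε ≤ ε A(1) ≤ t ≤ M A(1) ≤ A M` by monotonicity of `A x / x`.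
  have hAε : A ε ≤ t := by
    have := div_le_div_of_convexOn_Ici hconv h0 hε (min_le_left 1 (t / A 1))
    rw [div_one, div_le_iff₀ hε] at this
    calc A ε ≤ A 1 * ε := this
      _ ≤ A 1 * (t / A 1) := by gcongr; exact min_le_right _ _
      _ = t := mul_div_cancel₀ t h1.ne'
  have hAM : t ≤ A M := by
    have hM : 0 < M := one_pos.trans_le (le_max_left _ _)
    have := div_le_div_of_convexOn_Ici hconv h0 one_pos (le_max_left 1 (t / A 1))
    rw [div_one, le_div_iff₀ hM] at this
    calc t = A 1 * (t / A 1) := (mul_div_cancel₀ t h1.ne').symm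
      _ ≤ A 1 * M := by gcongr; exact le_max_right _ _
      _ ≤ A M := this
  obtain ⟨s, hs, hAs⟩ := intermediate_value_Icc (min_le_max : ε ≤ M)
    ((continuousOn_Ioi_of_convexOn_Ici hconv).mono fun x hx => hε.trans_le hx.1) ⟨hAε, hAM⟩
  exact ⟨s, hε.trans_le hs.1, hAs⟩

theorem youngConj_div_le (hconv : ConvexOn ℝ (Ici 0) A) (h0 : A 0 = 0)
    {s : ℝ} (hs : 0 < s) (hAs : 0 ≤ A s) :
    youngConj (fun τ => ENNReal.ofReal (A τ)) (A s / s) ≤ ENNReal.ofReal (A s) := by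
  refine iSup₂_le fun τ hτ => ?_
  rcases le_or_gt τ s with hτs | hsτ
  · refine tsub_le_self.trans (ENNReal.ofReal_le_ofReal ?_)
    calc τ * (A s / s) ≤ s * (A s / s) := by gcongr
      _ = A s := mul_div_cancel₀ _ hs.ne'
  · have hle : τ * (A s / s) ≤ A τ := by
      have := div_le_div_of_convexOn_Ici hconv h0 hs hsτ.le
      rwa [le_div_iff₀ (hs.trans hsτ), mul_comm] at this
    rw [tsub_eq_zero_of_le (ENNReal.ofReal_le_ofReal hle)]
    exact zero_le

end YoungFunction

theorem intervalIntegrable_zero_of_integrableOn_Ioc_of_continuousOn {f : ℝ → ℝ}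
    (hf : IntegrableOn f (Ioc 0 1)) (hc : ContinuousOn f (Ioi 0)) {b : ℝ} (hb : 0 ≤ b) :
    IntervalIntegrable f volume 0 b := by
  have h01 : IntervalIntegrable f volume 0 1 :=
    (intervalIntegrable_iff_integrableOn_Ioc_of_le zero_le_one).2 hf
  rcases le_total b 1 with hb1 | hb1
  · exact h01.mono_set (uIcc_subset_uIcc_left (by simp [hb, hb1]))
  · refine h01.trans (hc.mono ?_).intervalIntegrable
    rw [uIcc_of_le hb1]
    exact fun x hx => one_pos.trans_le hx.1

theorem strictMonoOn_integral_zero {f : ℝ → ℝ}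
    (hf : ∀ b, 0 ≤ b → IntervalIntegrable f volume 0 b) (hpos : ∀ x, 0 < x → 0 < f x) :
    StrictMonoOn (fun b => ∫ x in 0..b, f x) (Ici 0) := by
  intro a ha b hb hab
  dsimp only
  have hab' : IntervalIntegrable f volume a b := (hf a ha).symm.trans (hf b hb)
  rw [← intervalIntegral.integral_add_adjacent_intervals (hf a ha) hab', lt_add_iff_pos_right]
  exact intervalIntegral.intervalIntegral_pos_of_pos_on hab'
    (fun x hx => hpos x ((mem_Ici.1 ha).trans_lt hx.1)) hab

theorem mul_le_integral_zero_of_le {f : ℝ → ℝ} {c s : ℝ} (hs : 0 ≤ s)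
    (hf : IntervalIntegrable f volume 0 s) (hc : ∀ x ∈ Ioo 0 s, c ≤ f x) :
    s * c ≤ ∫ x in 0..s, f x := by
  simpa using intervalIntegral.integral_mono_on_of_le_Ioo hs intervalIntegrable_const hf hc

theorem csSup_setOf_le_of_strictMonoOn {f : ℝ → ℝ} (hf : StrictMonoOn f (Ici 0))
    {s : ℝ} (hs : 0 ≤ s) : sSup {u | 0 ≤ u ∧ f u ≤ f s} = s := by
  have : {u | 0 ≤ u ∧ f u ≤ f s} = Icc 0 s := by
    ext u
    exact and_congr_right fun hu => hf.le_iff_le hu hs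
  rw [this, csSup_Icc hs]

section SobolevConjugate

variable {A : ℝ → ℝ} {n : ℕ}

theorem intervalIntegrable_div_rpow (hconv : ConvexOn ℝ (Ici 0) A)
    (hpos : ∀ t, 0 < t → 0 < A t) {q : ℝ} (hint : IntegrableOn (fun r => (r / A r) ^ q) (Ioc 0 1))
    {b : ℝ} (hb : 0 ≤ b) : IntervalIntegrable (fun r => (r / A r) ^ q) volume 0 b := by
  refine intervalIntegrable_zero_of_integrableOn_Ioc_of_continuousOn hint ?_ hb
  exact (continuousOn_id.div (continuousOn_Ioi_of_convexOn_Ici hconv)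
    fun r hr => (hpos r hr).ne').rpow_const fun r hr => Or.inl (div_pos hr (hpos r hr)).ne'

theorem sobolevH_strictMonoOn (hn : 2 ≤ n) (hpos : ∀ t, 0 < t → 0 < A t)
    (hint : ∀ b, 0 ≤ b →
      IntervalIntegrable (fun r => (r / A r) ^ ((1 : ℝ) / ((n : ℝ) - 1))) volume 0 b) :
    StrictMonoOn (sobolevH A n) (Ici 0) := by
  have hn' : (2 : ℝ) ≤ n := by exact_mod_cast hn
  have hI := strictMonoOn_integral_zero hint
    fun r hr => Real.rpow_pos_of_pos (div_pos hr (hpos r hr)) _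
  refine (Real.strictMonoOn_rpow_Ici_of_exponent_pos (by
    apply div_pos <;> linarith)).comp hI fun b hb => ?_
  simpa using hI.monotoneOn self_mem_Ici hb (mem_Ici.1 hb)

theorem div_rpow_le_sobolevH (hn : 2 ≤ n) (hconv : ConvexOn ℝ (Ici 0) A) (h0 : A 0 = 0)
    (hpos : ∀ t, 0 < t → 0 < A t) {s : ℝ} (hs : 0 < s)
    (hint : IntervalIntegrable (fun r => (r / A r) ^ ((1 : ℝ) / ((n : ℝ) - 1))) volume 0 s) :
    s / A s ^ ((1 : ℝ) / n) ≤ sobolevH A n s := by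
  have hn' : (2 : ℝ) ≤ n := by exact_mod_cast hn
  have hAs := hpos s hs
  have hI : s * (s / A s) ^ ((1 : ℝ) / ((n : ℝ) - 1)) ≤
      ∫ r in (0 : ℝ)..s, (r / A r) ^ ((1 : ℝ) / ((n : ℝ) - 1)) := by
    refine mul_le_integral_zero_of_le hs.le hint fun r hr => ?_
    have hratio : s / A s ≤ r / A r := by
      rw [← one_div_div (A s), ← one_div_div (A r)]
      exact one_div_le_one_div_of_le (div_pos (hpos r hr.1) hr.1)
        (div_le_div_of_convexOn_Ici hconv h0 hr.1 hr.2.le)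
    exact Real.rpow_le_rpow (by positivity) hratio (by apply div_nonneg <;> linarith)
  have hn1 : (n : ℝ) - 1 ≠ 0 := by linarith
  have hexp : 1 / ((n : ℝ) - 1) * (((n : ℝ) - 1) / n) = 1 / n := by field_simp
  have hsum : ((n : ℝ) - 1) / n + 1 / n = 1 := by field_simp; ring
  calc s / A s ^ ((1 : ℝ) / n)
      = (s * (s / A s) ^ ((1 : ℝ) / ((n : ℝ) - 1))) ^ (((n : ℝ) - 1) / n) := by
        rw [Real.mul_rpow hs.le (by positivity), ← Real.rpow_mul (by positivity), hexp,
          Real.div_rpow hs.le hAs.le, mul_div_assoc', ← Real.rpow_add hs, hsum, Real.rpow_one]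
    _ ≤ sobolevH A n s := Real.rpow_le_rpow (by positivity) hI (by apply div_nonneg <;> linarith)

theorem sobolevConj_sobolevH (hH : StrictMonoOn (sobolevH A n) (Ici 0)) {s : ℝ} (hs : 0 ≤ s) :
    sobolevConj A n (sobolevH A n s) = A s := by
  rw [sobolevConj, sobolevHInv, csSup_setOf_le_of_strictMonoOn hH hs]

end SobolevConjugate

theorem ofReal_le_rcInv {B : ℝ → ℝ≥0∞} {x : ℝ} {s : ℝ≥0∞} (hx : 0 ≤ x) (h : B x ≤ s) :
    ENNReal.ofReal x ≤ rcInv B s :=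
  le_biSup (fun t => ENNReal.ofReal t) (show x ∈ {t | 0 ≤ t ∧ B t ≤ s} from ⟨hx, h⟩)

theorem inv_mul_inv_le_inv_ofReal {a b : ℝ≥0∞} {x y z : ℝ} (hx : 0 ≤ x)
    (ha : ENNReal.ofReal x ≤ a) (hb : ENNReal.ofReal y ≤ b) (hz : z ≤ x * y) :
    a⁻¹ * b⁻¹ ≤ (ENNReal.ofReal z)⁻¹ :=
  calc a⁻¹ * b⁻¹ ≤ (ENNReal.ofReal x)⁻¹ * (ENNReal.ofReal y)⁻¹ :=
        mul_le_mul' (ENNReal.inv_le_inv.2 ha) (ENNReal.inv_le_inv.2 hb)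
    _ = (ENNReal.ofReal (x * y))⁻¹ := by
        rw [ENNReal.ofReal_mul hx, ENNReal.mul_inv (Or.inr ENNReal.ofReal_ne_top)
          (Or.inl ENNReal.ofReal_ne_top)]
    _ ≤ (ENNReal.ofReal z)⁻¹ := ENNReal.inv_le_inv.2 (ENNReal.ofReal_le_ofReal hz)

theorem inverse_conjugate_sobolev_inequality_general
    (n : ℕ) (hn : 2 ≤ n) (A : ℝ → ℝ)
    (hconv : ConvexOn ℝ (Set.Ici 0) A) (h0 : A 0 = 0)
    (hpos : ∀ t : ℝ, 0 < t → 0 < A t)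
    (hint : MeasureTheory.IntegrableOn
      (fun r => (r / A r) ^ ((1 : ℝ) / ((n : ℝ) - 1))) (Set.Ioc 0 1)) :
    ∀ t : ℝ, 0 < t →
      (rcInv (youngConj (fun τ => ENNReal.ofReal (A τ))) (ENNReal.ofReal t))⁻¹ *
        (rcInv (fun τ => ENNReal.ofReal (sobolevConj A n τ)) (ENNReal.ofReal t))⁻¹ ≤
      (ENNReal.ofReal (t ^ (((n : ℝ) - 1) / n)))⁻¹ := by
  intro t ht
  obtain ⟨s, hs, rfl⟩ := exists_pos_eq_of_convexOn_Ici hconv h0 (hpos 1 one_pos) ht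
  have hg := fun b (hb : 0 ≤ b) => intervalIntegrable_div_rpow hconv hpos hint hb
  have hH := div_rpow_le_sobolevH hn hconv h0 hpos hs (hg s hs.le)
  have hX := ofReal_le_rcInv (div_pos ht hs).le (youngConj_div_le hconv h0 hs ht.le)
  have hY : ENNReal.ofReal (sobolevH A n s) ≤
      rcInv (fun τ => ENNReal.ofReal (sobolevConj A n τ)) (ENNReal.ofReal (A s)) :=
    ofReal_le_rcInv ((by positivity : 0 ≤ s / A s ^ ((1 : ℝ) / n)).trans hH)
      (by rw [sobolevConj_sobolevH (sobolevH_strictMonoOn hn hpos hg) hs.le])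
  refine inv_mul_inv_le_inv_ofReal (div_pos ht hs).le hX hY ?_
  have hn' : (0 : ℝ) < n := by positivity
  calc A s ^ (((n : ℝ) - 1) / n) = A s / s * (s / A s ^ ((1 : ℝ) / n)) := by
        rw [sub_div, div_self hn'.ne', Real.rpow_sub ht, Real.rpow_one]
        field_simp
    _ ≤ A s / s * sobolevH A n s := by gcongr

/-- For `n ≥ 2` and a Young function `A` with `∫₀¹ (t/A(t))^{1/(n−1)} dt < ∞`,
one has `(Ã⁻¹(t))⁻¹ · (Aₙ⁻¹(t))⁻¹ ≤ t^{−(n−1)/n}` for every `t > 0`. -/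
theorem inverse_conjugate_sobolev_inequality
    (n : ℕ) (hn : 2 ≤ n) (A : ℝ → ℝ)
    (hconv : ConvexOn ℝ (Set.Ici 0) A) (h0 : A 0 = 0)
    (hnonneg : ∀ t : ℝ, 0 ≤ t → 0 ≤ A t) (hpos : ∀ t : ℝ, 0 < t → 0 < A t)
    (hint : MeasureTheory.IntegrableOn
      (fun r => (r / A r) ^ ((1 : ℝ) / ((n : ℝ) - 1))) (Set.Ioc 0 1)) :
    ∀ t : ℝ, 0 < t →
      (rcInv (youngConj (fun τ => ENNReal.ofReal (A τ))) (ENNReal.ofReal t))⁻¹ *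
        (rcInv (fun τ => ENNReal.ofReal (sobolevConj A n τ)) (ENNReal.ofReal t))⁻¹ ≤
      (ENNReal.ofReal (t ^ (((n : ℝ) - 1) / n)))⁻¹ :=
  inverse_conjugate_sobolev_inequality_general n hn A hconv h0 hpos hint
end

section
/- (Key step of the previous lemma.) Let n ≥ 2 and A a Young function with ∫₀¹ (t/A(t))^{1/(n−1)} dt < ∞ and ∫₁^∞ (t/A(t))^{1/(n−1)} dt = ∞. With Hₙ(s) = (∫₀ˢ (t/A(t))^{1/(n−1)} dt)^{(n−1)/n}, one has lim_{t→∞} Hₙ⁻¹(t)/t = ∞, where Hₙ⁻¹ is the generalized inverse of Hₙ. -/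
open MeasureTheory Set Filter Asymptotics

theorem ConvexOn.monotoneOn_div_self {A : ℝ → ℝ} (hA : ConvexOn ℝ (Ici 0) A) (h0 : A 0 = 0) :
    MonotoneOn (fun r => A r / r) (Ioi 0) := by
  intro x hx y hy hxy
  simpa [h0] using hA.secant_mono self_mem_Ici (mem_Ici.2 (le_of_lt hx))
    (mem_Ici.2 (le_of_lt hy)) (ne_of_gt hx) (ne_of_gt hy) hxy

theorem ConvexOn.antitoneOn_rpow_self_div {A : ℝ → ℝ} (hA : ConvexOn ℝ (Ici 0) A) (h0 : A 0 = 0)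
    (hpos : ∀ r : ℝ, 0 < r → 0 < A r) {e : ℝ} (he : 0 ≤ e) :
    AntitoneOn (fun r => (r / A r) ^ e) (Ioi 0) := by
  intro x hx y hy hxy
  have hslope : A x / x ≤ A y / y := hA.monotoneOn_div_self h0 hx hy hxy
  refine Real.rpow_le_rpow (div_nonneg (le_of_lt hy) (hpos y hy).le) ?_ he
  rw [← inv_div (A y) y, ← inv_div (A x) x]
  exact inv_anti₀ (div_pos (hpos x hx) hx) hslope

theorem AntitoneOn.integrableOn_Ioc_of_integrableOn_Ioc {μ : Measure ℝ}
    [IsFiniteMeasureOnCompacts μ] {f : ℝ → ℝ} {a c : ℝ} (hf : AntitoneOn f (Ioi a)) (hac : a < c)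
    (hint : IntegrableOn f (Ioc a c) μ) (b : ℝ) : IntegrableOn f (Ioc a b) μ := by
  rcases le_or_gt b c with hbc | hcb
  · exact hint.mono_set (Ioc_subset_Ioc_right hbc)
  · have htail : IntegrableOn f (Ioc c b) μ :=
      ((hf.mono fun x hx => hac.trans_le hx.1).integrableOn_isCompact isCompact_Icc).mono_set
        Ioc_subset_Icc_self
    rw [← Ioc_union_Ioc_eq_Ioc hac.le hcb.le]
    exact hint.union htail

theorem tendsto_intervalIntegral_atTop_of_not_integrableOn_Ioi {μ : Measure ℝ} {f : ℝ → ℝ}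
    {a : ℝ} (hf : ∀ x ∈ Ioi a, 0 ≤ f x) (hloc : ∀ b, IntegrableOn f (Ioc a b) μ)
    (hdiv : ¬ IntegrableOn f (Ioi a) μ) :
    Tendsto (fun b => ∫ x in a..b, f x ∂μ) atTop atTop := by
  refine tendsto_atTop.2 fun c => ?_
  by_contra hc
  refine hdiv (integrableOn_Ioi_of_intervalIntegral_norm_bounded c a hloc tendsto_id ?_)
  filter_upwards [eventually_ge_atTop a] with b hab
  obtain ⟨b', hbb', hb'c⟩ := frequently_atTop.1 (not_eventually.1 hc) b
  calc ∫ x in a..b, ‖f x‖ ∂μ = ∫ x in a..b, f x ∂μ := by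
        rw [intervalIntegral.integral_of_le hab, intervalIntegral.integral_of_le hab]
        exact setIntegral_congr_fun measurableSet_Ioc fun x hx => Real.norm_of_nonneg (hf x hx.1)
    _ ≤ ∫ x in a..b', f x ∂μ :=
        intervalIntegral.integral_mono_interval le_rfl hab hbb'
          (ae_restrict_of_forall_mem measurableSet_Ioc fun x hx => hf x hx.1)
          ((intervalIntegrable_iff_integrableOn_Ioc_of_le (hab.trans hbb')).2 (hloc b'))
    _ ≤ c := (not_le.1 hb'c).le

theorem AntitoneOn.intervalIntegral_isBigO_id {f : ℝ → ℝ} (hanti : AntitoneOn f (Ioi 0))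
    (hf : ∀ x ∈ Ioi 0, 0 ≤ f x) (hloc : ∀ b, IntegrableOn f (Ioc 0 b)) :
    (fun s => ∫ x in (0 : ℝ)..s, f x) =O[atTop] id := by
  have hII : ∀ a b : ℝ, 0 ≤ a → a ≤ b → IntervalIntegrable f volume a b := fun a b ha hab =>
    (intervalIntegrable_iff_integrableOn_Ioc_of_le hab).2
      ((hloc b).mono_set (Ioc_subset_Ioc_left ha))
  have hnonneg : ∀ b : ℝ, 0 ≤ b → 0 ≤ ∫ x in (0 : ℝ)..b, f x := fun b hb => by
    rw [intervalIntegral.integral_of_le hb]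
    exact setIntegral_nonneg measurableSet_Ioc fun x hx => hf x hx.1
  have hf1 : 0 ≤ f 1 := hf 1 (mem_Ioi.2 one_pos)
  have hg1 : 0 ≤ ∫ x in (0 : ℝ)..1, f x := hnonneg 1 zero_le_one
  refine IsBigO.of_bound ((∫ x in (0 : ℝ)..1, f x) + f 1) ?_
  filter_upwards [eventually_ge_atTop 1] with s hs
  have htail : ∫ x in (1 : ℝ)..s, f x ≤ (s - 1) * f 1 := by
    simpa using intervalIntegral.integral_mono_on hs (hII 1 s zero_le_one hs)
      intervalIntegrable_const fun x hx =>
        hanti (mem_Ioi.2 one_pos) (mem_Ioi.2 (one_pos.trans_le hx.1)) hx.1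
  have hs0 : 0 ≤ s := zero_le_one.trans hs
  rw [Real.norm_of_nonneg (hnonneg s hs0), id, Real.norm_of_nonneg hs0]
  calc ∫ x in (0 : ℝ)..s, f x = (∫ x in (0 : ℝ)..1, f x) + ∫ x in (1 : ℝ)..s, f x :=
        (intervalIntegral.integral_add_adjacent_intervals (hII 0 1 le_rfl zero_le_one)
          (hII 1 s zero_le_one hs)).symm
    _ ≤ (∫ x in (0 : ℝ)..1, f x) + (s - 1) * f 1 := by gcongr
    _ ≤ ((∫ x in (0 : ℝ)..1, f x) + f 1) * s := by nlinarith

theorem isLittleO_rpow_id_atTop {p : ℝ} (hp : p < 1) :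
    (fun x : ℝ => x ^ p) =o[atTop] id := by
  refine (isLittleO_iff_tendsto' ?_).2 ?_
  · filter_upwards [eventually_gt_atTop 0] with x hx h
    exact absurd h hx.ne'
  · have hlim := tendsto_rpow_neg_atTop (sub_pos.2 hp)
    rw [neg_sub] at hlim
    refine hlim.congr' ?_
    filter_upwards [eventually_gt_atTop 0] with x hx
    exact Real.rpow_sub_one hx.ne' p

theorem Asymptotics.IsBigO.rpow_isLittleO_id {g : ℝ → ℝ} (hg : g =O[atTop] id) {p : ℝ}
    (hp0 : 0 ≤ p) (hp1 : p < 1) : (fun s => g s ^ p) =o[atTop] id :=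
  (hg.rpow hp0 (eventually_ge_atTop 0)).trans_isLittleO (isLittleO_rpow_id_atTop hp1)

theorem tendsto_sSup_setOf_le_div_atTop {H : ℝ → ℝ} (htop : Tendsto H atTop atTop)
    (hsub : H =o[atTop] id) :
    Tendsto (fun t => sSup {s | 0 ≤ s ∧ H s ≤ t} / t) atTop atTop := by
  refine tendsto_atTop.2 fun b => ?_
  set M := max b 1
  have hM : 0 < M := zero_lt_one.trans_le (le_max_right b 1)
  have hHM : ∀ᶠ t in atTop, ‖H (M * t)‖ ≤ M⁻¹ * ‖M * t‖ :=
    (tendsto_id.const_mul_atTop hM).eventually (hsub.def (inv_pos.2 hM))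
  filter_upwards [hHM, eventually_gt_atTop 0] with t hHt ht
  have hbdd : BddAbove {s | 0 ≤ s ∧ H s ≤ t} := by
    obtain ⟨S, hS⟩ := eventually_atTop.1 (htop.eventually_gt_atTop t)
    exact ⟨S, fun s hs => not_lt.1 fun hSs => (hS s hSs.le).not_ge hs.2⟩
  have hmem : M * t ∈ {s | 0 ≤ s ∧ H s ≤ t} := by
    refine ⟨by positivity, (le_abs_self _).trans ?_⟩
    simpa [abs_of_pos hM, abs_of_pos ht, hM.ne'] using hHt
  rw [le_div_iff₀ ht]
  exact (mul_le_mul_of_nonneg_right (le_max_left b 1) ht.le).trans (le_csSup hbdd hmem)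

theorem sobolevHInv_superlinear_general
    (n : ℕ) (hn : 2 ≤ n) (A : ℝ → ℝ)
    (hconv : ConvexOn ℝ (Set.Ici 0) A) (h0 : A 0 = 0)
    (hpos : ∀ t : ℝ, 0 < t → 0 < A t)
    (hint : MeasureTheory.IntegrableOn
      (fun r => (r / A r) ^ ((1 : ℝ) / ((n : ℝ) - 1))) (Set.Ioc 0 1))
    (hdiv : ¬ MeasureTheory.IntegrableOn
      (fun r => (r / A r) ^ ((1 : ℝ) / ((n : ℝ) - 1))) (Set.Ioi 1)) :
    Filter.Tendsto (fun t => sobolevHInv A n t / t) Filter.atTop Filter.atTop := by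
  have hn1 : (1 : ℝ) < n := by exact_mod_cast hn
  have he : (0 : ℝ) ≤ 1 / ((n : ℝ) - 1) := one_div_nonneg.2 (sub_pos.2 hn1).le
  have hanti := hconv.antitoneOn_rpow_self_div h0 hpos he
  have hf : ∀ r ∈ Ioi (0 : ℝ), 0 ≤ (r / A r) ^ ((1 : ℝ) / ((n : ℝ) - 1)) := fun r hr =>
    Real.rpow_nonneg (div_nonneg (le_of_lt hr) (hpos r hr).le) _
  have hloc := hanti.integrableOn_Ioc_of_integrableOn_Ioc zero_lt_one hint
  have hp0 : (0 : ℝ) < ((n : ℝ) - 1) / n := div_pos (sub_pos.2 hn1) (by positivity)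
  have hp1 : ((n : ℝ) - 1) / n < 1 := (div_lt_one (by positivity)).2 (by linarith)
  exact tendsto_sSup_setOf_le_div_atTop
    ((tendsto_rpow_atTop hp0).comp (tendsto_intervalIntegral_atTop_of_not_integrableOn_Ioi hf hloc
      fun h => hdiv (h.mono_set (Ioi_subset_Ioi zero_le_one))))
    ((hanti.intervalIntegral_isBigO_id hf hloc).rpow_isLittleO_id hp0.le hp1)

/-- If `∫₀¹ (t/A(t))^{1/(n−1)} dt < ∞` and `∫₁^∞ (t/A(t))^{1/(n−1)} dt = ∞`, then
`Hₙ⁻¹(t)/t → ∞` as `t → ∞`. -/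
theorem sobolevHInv_superlinear
    (n : ℕ) (hn : 2 ≤ n) (A : ℝ → ℝ)
    (hconv : ConvexOn ℝ (Set.Ici 0) A) (h0 : A 0 = 0)
    (hnonneg : ∀ t : ℝ, 0 ≤ t → 0 ≤ A t) (hpos : ∀ t : ℝ, 0 < t → 0 < A t)
    (hint : MeasureTheory.IntegrableOn
      (fun r => (r / A r) ^ ((1 : ℝ) / ((n : ℝ) - 1))) (Set.Ioc 0 1))
    (hdiv : ¬ MeasureTheory.IntegrableOn
      (fun r => (r / A r) ^ ((1 : ℝ) / ((n : ℝ) - 1))) (Set.Ioi 1)) :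
    Filter.Tendsto (fun t => sobolevHInv A n t / t) Filter.atTop Filter.atTop :=
  sobolevHInv_superlinear_general n hn A hconv h0 hpos hint hdiv
end
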